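/- Let λ be an n-core and let u ∈ S̃⁰_n be such that u w_λ^{-1} is a cyclically decreasing element of S̃_n and ℓ(u w_λ^{-1}) = ℓ(u) − ℓ(w_λ). Then u w_λ^{-1} lies in the subgroup of S̃_n generated by the simple reflections {s₀, …, s_{n−1}} \ {s_x}, where x = λ₁ − 1 mod n. -/

import Mathlib

open scoped Classical

/-- A partition: an antitone, eventually-zero sequence of row lengths.
Row `0` is the bottom row; `part i` is the length of row `i`. -/
structure YPartition where
  part : ℕ → ℕ
  antitone' : ∀ ⦃i j : ℕ⦄, i ≤ j → part j ≤ part i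
  eventually_zero : ∃ N, ∀ i, N ≤ i → part i = 0

def emptyPartition : YPartition :=
  ⟨fun _ => 0, fun _ _ _ => le_rfl, ⟨0, fun _ _ => rfl⟩⟩

/-- Cells of a partition, 0-indexed: `(i, j)` is in row `i` (from the bottom), column `j`. -/
def cells (p : YPartition) : Set (ℕ × ℕ) := {c | c.2 < p.part c.1}

/-- Containment of partitions. -/
def Included (p q : YPartition) : Prop := ∀ i, p.part i ≤ q.part i

/-- The skew shape `q/p`. -/
def skewCells (q p : YPartition) : Set (ℕ × ℕ) := cells q \ cells p

/-- The content of a cell. -/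
def content (c : ℕ × ℕ) : ℤ := (c.2 : ℤ) - (c.1 : ℤ)

/-- The number of cells of `p` above `(i,j)` in column `j`. -/
noncomputable def legLen (p : YPartition) (i j : ℕ) : ℕ :=
  Nat.card {i' : ℕ // i < i' ∧ j < p.part i'}

/-- The hook length of the cell `(i,j)` of `p`. -/
noncomputable def hookLen (p : YPartition) (i j : ℕ) : ℕ :=
  (p.part i - j) + legLen p i j

/-- An `n`-core: no cell has hook length `n`. -/
def IsCore (n : ℕ) (p : YPartition) : Prop :=
  ∀ i j : ℕ, j < p.part i → hookLen p i j ≠ n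

/-- The degree of an `n`-core: the number of cells with hook length `< n`. -/
noncomputable def degCore (n : ℕ) (p : YPartition) : ℕ :=
  Nat.card {c : ℕ × ℕ // c ∈ cells p ∧ hookLen p c.1 c.2 < n}

/-- The covering relation of the strong (Bruhat) order on `n`-cores. -/
def StrongCover (n : ℕ) (p q : YPartition) : Prop :=
  IsCore n p ∧ IsCore n q ∧ Included p q ∧ degCore n q = degCore n p + 1

/-- `q/p` is a horizontal strip: at most one cell in each column. -/
def IsHorizontalStrip (p q : YPartition) : Prop :=
  Included p q ∧ ∀ i, q.part (i + 1) ≤ p.part i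

/-- The number of cells of a partition. -/
noncomputable def psize (p : YPartition) : ℕ := Nat.card {c : ℕ × ℕ // c ∈ cells p}

/-- The number of cells of the skew shape `q/p`. -/
noncomputable def skewSize (q p : YPartition) : ℕ := Nat.card {c : ℕ × ℕ // c ∈ skewCells q p}

/-- Edgewise adjacency of cells. -/
def AdjCells (c d : ℕ × ℕ) : Prop :=
  (c.1 = d.1 ∧ (c.2 + 1 = d.2 ∨ d.2 + 1 = c.2)) ∨
  (c.2 = d.2 ∧ (c.1 + 1 = d.1 ∨ d.1 + 1 = c.1))

/-- A ribbon: a nonempty edgewise-connected set of cells with no 2×2 block. -/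
def IsRibbon (S : Set (ℕ × ℕ)) : Prop :=
  S.Nonempty ∧
  (∀ c ∈ S, ∀ d ∈ S, Relation.ReflTransGen (fun x y => y ∈ S ∧ AdjCells x y) c d) ∧
  ∀ i j : ℕ, ¬ ((i, j) ∈ S ∧ (i + 1, j) ∈ S ∧ (i, j + 1) ∈ S ∧ (i + 1, j + 1) ∈ S)

/-- `c` is the head (southeasternmost cell) of `S`. -/
def IsHead (S : Set (ℕ × ℕ)) (c : ℕ × ℕ) : Prop :=
  c ∈ S ∧ ∀ d ∈ S, c.1 ≤ d.1 ∧ d.2 ≤ c.2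

/-- `c` is the tail (northwesternmost cell) of `S`. -/
def IsTail (S : Set (ℕ × ℕ)) (c : ℕ × ℕ) : Prop :=
  c ∈ S ∧ ∀ d ∈ S, d.1 ≤ c.1 ∧ c.2 ≤ d.2

/-- `S` is a connected component of `T` which is a ribbon (one of the ribbons of `T`). -/
def IsRibbonComponent (T S : Set (ℕ × ℕ)) : Prop :=
  S ⊆ T ∧ IsRibbon S ∧ ∀ c ∈ S, ∀ d ∈ T, AdjCells c d → d ∈ S

/-- `R(n-1, p) = (p₁ + n - 1, p₁, p₂, …)`. -/
def Rtop (n : ℕ) (p : YPartition) : YPartition where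
  part i := if i = 0 then p.part 0 + (n - 1) else p.part (i - 1)
  antitone' := by
    intro i j hij
    by_cases hj : j = 0
    · have hi : i = 0 := by omega
      simp [hi, hj]
    · by_cases hi : i = 0
      · simp only [hi, if_pos rfl, if_neg hj]
        exact le_trans (p.antitone' (Nat.zero_le _)) (Nat.le_add_right _ _)
      · simp only [if_neg hi, if_neg hj]
        exact p.antitone' (by omega)
  eventually_zero := by
    obtain ⟨N, hN⟩ := p.eventually_zero
    refine ⟨N + 1, fun i hi => ?_⟩
    have hi0 : i ≠ 0 := by omega
    simp only [if_neg hi0]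
    exact hN _ (by omega)

/-- `(λ, ν)` is a horizontal strong `m`-strip. -/
def IsHorizontalStrongStrip (n : ℕ) (lam nu : YPartition) (m : ℕ) : Prop :=
  Included lam nu ∧ m + degCore n nu = (n - 1) + degCore n lam ∧
  ∃ γ : ℕ → YPartition, γ 0 = nu ∧ γ m = Rtop n lam ∧
    ∀ i < m, StrongCover n (γ i) (γ (i + 1)) ∧ (γ i).part 0 < (γ (i + 1)).part 0

/-- A strong `m`-strip from `nu` to `gam` with chain `γ` and content vector `c 1, …, c m`. -/
def IsStrongStrip (n m : ℕ) (nu gam : YPartition) (γ : ℕ → YPartition) (c : ℕ → ℤ) : Prop :=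
  γ 0 = nu ∧ γ m = gam ∧
  (∀ i < m, StrongCover n (γ i) (γ (i + 1)) ∧
    ∃ S, IsRibbonComponent (skewCells (γ (i + 1)) (γ i)) S ∧
      ∃ h, IsHead S h ∧ content h = c (i + 1)) ∧
  ∀ i, 1 ≤ i → i < m → c i < c (i + 1)

/-- Ribbon strong strips (with prescribed target core `Rc` and prescribed column set). -/
def IsRibbonStrongStrip (n : ℕ) (nu Rc : YPartition) (cols : Set ℕ) (m : ℕ) : Prop :=
  ∃ γ : ℕ → YPartition, γ 0 = nu ∧ γ m = Rc ∧
    ∀ i < m, StrongCover n (γ i) (γ (i + 1)) ∧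
      ∃ S, IsRibbonComponent (skewCells (γ (i + 1)) (γ i)) S ∧
        ∃ t, IsTail S t ∧ t.2 ∈ cols

/- ### The affine symmetric group -/

/-- The underlying function of the simple reflection `s_i` of the affine symmetric group. -/
def sFun (n : ℕ) (i k : ℤ) : ℤ :=
  if (k - i) % n = 0 then k + 1 else if (k - i) % n = 1 then k - 1 else k

lemma one_emod_eq (n : ℕ) (hn : 2 ≤ n) : (1 : ℤ) % n = 1 :=
  Int.emod_eq_of_lt (by norm_num) (by exact_mod_cast hn)

lemma sFun_involutive (n : ℕ) (hn : 2 ≤ n) (i : ℤ) : Function.Involutive (sFun n i) := by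
  have h1n := one_emod_eq n hn
  intro k
  by_cases h0 : (k - i) % n = 0
  · have e1 : (k + 1 - i) % n = 1 := by
      have e : k + 1 - i = (k - i) + 1 := by ring
      rw [e, Int.add_emod, h0, h1n]
      simpa using h1n
    have hk : sFun n i k = k + 1 := by simp [sFun, h0]
    rw [hk]
    simp [sFun, e1]
  · by_cases h1 : (k - i) % n = 1
    · have e0 : (k - 1 - i) % n = 0 := by
        have e : k - 1 - i = (k - i) - 1 := by ring
        rw [e, Int.sub_emod, h1, h1n]
        simp
      have hk : sFun n i k = k - 1 := by simp [sFun, h0, h1]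
      rw [hk]
      simp [sFun, e0]
    · have hk : sFun n i k = k := by simp [sFun, h0, h1]
      rw [hk]
      simp [sFun, h0, h1]

/-- The simple reflection `s_i` (depending only on `i mod n`). -/
noncomputable def sRefl (n : ℕ) (hn : 2 ≤ n) (i : ℤ) : Equiv.Perm ℤ :=
  Function.Involutive.toPerm (sFun n i) (sFun_involutive n hn i)

/-- The product `s_{i₁} ⋯ s_{i_ℓ}` of the word `l = [i₁, …, i_ℓ]`. -/
noncomputable def wordProd (n : ℕ) (hn : 2 ≤ n) (l : List ℤ) : Equiv.Perm ℤ :=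
  (l.map (sRefl n hn)).prod

/-- The Coxeter length: minimal length of a word in the simple reflections. -/
noncomputable def alen (n : ℕ) (hn : 2 ≤ n) (w : Equiv.Perm ℤ) : ℕ :=
  sInf {m : ℕ | ∃ l : List ℤ, l.length = m ∧ w = wordProd n hn l}

def IsReducedWord (n : ℕ) (hn : 2 ≤ n) (w : Equiv.Perm ℤ) (l : List ℤ) : Prop :=
  w = wordProd n hn l ∧ l.length = alen n hn w

/-- Membership in the affine symmetric group. -/
def IsAffinePerm (n : ℕ) (w : Equiv.Perm ℤ) : Prop :=
  (∀ k : ℤ, w (k + n) = w k + n) ∧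
  (∑ i ∈ Finset.range n, w ((i : ℤ) + 1)) = ((n : ℤ) * (n + 1)) / 2

/-- Affine Grassmannian elements: minimal-length coset representatives of S̃ₙ/Sₙ. -/
def IsAffGrassmannian (n : ℕ) (hn : 2 ≤ n) (w : Equiv.Perm ℤ) : Prop :=
  IsAffinePerm n w ∧
  ∀ v ∈ Subgroup.closure {g : Equiv.Perm ℤ | ∃ i : ℤ, ¬ ((i : ℤ) % n = 0) ∧ g = sRefl n hn i},
    alen n hn w ≤ alen n hn (w * v)

/-- An addable corner of `p` in row `r` (the cell `(r, p.part r)`). -/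
def AddableCorner (p : YPartition) (r : ℕ) : Prop :=
  r = 0 ∨ p.part r < p.part (r - 1)

/-- The content of the addable corner of `p` in row `r`. -/
def cornerContent (p : YPartition) (r : ℕ) : ℤ := (p.part r : ℤ) - (r : ℤ)

/-- `q = s_i · p` : `q` is obtained from `p` by adding all addable corners of residue `i`. -/
def ActStep (n : ℕ) (i : ℤ) (p q : YPartition) : Prop :=
  (∃ r, AddableCorner p r ∧ (cornerContent p r - i) % n = 0) ∧
  ∀ r, q.part r =
    if AddableCorner p r ∧ (cornerContent p r - i) % n = 0 then p.part r + 1 else p.part r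

/-- `ActList n l p q` : `q = s_{i₁} · (s_{i₂} · ⋯ (s_{i_ℓ} · p))` for `l = [i₁, …, i_ℓ]`. -/
def ActList (n : ℕ) : List ℤ → YPartition → YPartition → Prop
  | [], p, q => q = p
  | i :: l, p, q => ∃ p', ActList n l p p' ∧ ActStep n i p' q

/-- `p = 𝔞(w)`: `p` is obtained by acting on the empty partition by a reduced word of `w`. -/
def ACoreOf (n : ℕ) (hn : 2 ≤ n) (w : Equiv.Perm ℤ) (p : YPartition) : Prop :=
  ∃ l : List ℤ, IsReducedWord n hn w l ∧ ActList n l emptyPartition p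

/-- `w_λ`: the affine Grassmannian element corresponding to the `n`-core `p`. -/
noncomputable def wOf (n : ℕ) (hn : 2 ≤ n) (p : YPartition) : Equiv.Perm ℤ :=
  if h : ∃ w : Equiv.Perm ℤ, IsAffGrassmannian n hn w ∧ ACoreOf n hn w p then h.choose else 1

/-- A cyclically decreasing word: pairwise distinct residues, and `i+1` precedes `i`. -/
def IsCDWord (n : ℕ) (l : List ℤ) : Prop :=
  l.Pairwise (fun a b : ℤ => ¬ ((a - b) % (n : ℤ) = 0) ∧ ¬ ((b - (a + 1)) % (n : ℤ) = 0))

/-- A cyclically decreasing element of the affine symmetric group. -/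
def IsCyclicallyDecreasing (n : ℕ) (hn : 2 ≤ n) (w : Equiv.Perm ℤ) : Prop :=
  ∃ l : List ℤ, IsReducedWord n hn w l ∧ IsCDWord n l

/-- The underlying function of the transposition `τ_{a,b}`. -/
def tauFun (n : ℕ) (a b k : ℤ) : ℤ :=
  if (k - a) % n = 0 then k + (b - a) else if (k - b) % n = 0 then k - (b - a) else k

lemma tauFun_involutive (n : ℕ) (a b : ℤ) (h : ¬ ((b - a) % n = 0)) :
    Function.Involutive (tauFun n a b) := by
  intro k
  by_cases h0 : (k - a) % n = 0
  · have e1 : (k + (b - a) - a) % n = (b - a) % n := by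
      have e : k + (b - a) - a = (k - a) + (b - a) := by ring
      rw [e, Int.add_emod, h0]
      simp [Int.emod_emod_of_dvd]
    have e2 : (k + (b - a) - b) % n = 0 := by
      have e : k + (b - a) - b = k - a := by ring
      rw [e]; exact h0
    have hk : tauFun n a b k = k + (b - a) := by simp [tauFun, h0]
    rw [hk]
    simp [tauFun, e1, e2, h]
  · by_cases h1 : (k - b) % n = 0
    · have e0 : (k - (b - a) - a) % n = 0 := by
        have e : k - (b - a) - a = k - b := by ring
        rw [e]; exact h1
      have hk : tauFun n a b k = k - (b - a) := by simp [tauFun, h0, h1]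
      rw [hk]
      simp [tauFun, e0]
    · have hk : tauFun n a b k = k := by simp [tauFun, h0, h1]
      rw [hk]
      simp [tauFun, h0, h1]

/-- The transposition `τ_{a,b}` of the affine symmetric group (`a ≢ b (mod n)`). -/
noncomputable def tauRefl (n : ℕ) (a b : ℤ) (h : ¬ ((b - a) % n = 0)) : Equiv.Perm ℤ :=
  Function.Involutive.toPerm (tauFun n a b) (tauFun_involutive n a b h)

/- ### The maps p and 𝔠, rectangles -/

/-- `pMap n γ i`: the number of cells in row `i` of `γ` with hook length `< n`. -/
noncomputable def pMap (n : ℕ) (γ : YPartition) (i : ℕ) : ℕ :=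
  Nat.card {j : ℕ // j < γ.part i ∧ hookLen γ i j < n}

/-- The number of parts of `f` that are `≥ t`. -/
noncomputable def numPartsGe (f : ℕ → ℕ) (t : ℕ) : ℕ := Nat.card {i : ℕ // t ≤ f i}

/-- The rectangle `R_r = (r^(n-r))`. -/
def rectPartition (n r : ℕ) : YPartition where
  part i := if i < n - r then r else 0
  antitone' := by
    intro i j hij
    by_cases hj : j < n - r
    · simp [hj, show i < n - r by omega]
    · simp [hj]
  eventually_zero := ⟨n - r, fun i hi => by simp [Nat.not_lt.mpr hi]⟩

/-- The product `v r * v (r-1) * ⋯ * v 1`. -/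
noncomputable def revProd (v : ℕ → Equiv.Perm ℤ) : ℕ → Equiv.Perm ℤ
  | 0 => 1
  | j + 1 => v (j + 1) * revProd v j

/-!
Encode `w ∈ S̃_n` by its beads `w(ℤ_{≤ 0})`; acting on `∅` by a reduced word of `w_λ` produces
the beta-set `{λ_r - r}` of `λ`, and because `w` commutes with `k ↦ k + n` every runner is filled
from below. Hence no bead exceeds `λ₁` and the runner of `λ₁` is full below it.

Let `l ++ l₀` be the reduced word of `u`, with `l` cyclically decreasing and `l₀` a word of `w_λ`.
If `l` had a letter `j ≡ λ₁ - 1`, the letters after it avoid the residues of `λ₁ - 1` and `λ₁`,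
so the right factor `v` of `u` following `j` keeps this shape. Either some `z ≡ j` is a gap below
a bead, and then `s_j` is a left descent of `v` (length equals the number of inversions), or `s_j`
fixes the beads of `v`, so that `s_j v ∈ v S_n`. Both contradict the fact that the right factor
`s_j v` of the affine Grassmannian `u` is reduced and minimal in its coset.
-/

lemma Int.ModEq.add_le_of_lt {n a b : ℤ} (h : a ≡ b [ZMOD n]) (hab : a < b) : a + n ≤ b := by
  have := Int.le_of_dvd (by omega) h.dvd
  omega

section SimpleReflection

variable {n : ℕ}

lemma not_modEq_add_one (hn : 2 ≤ n) (a : ℤ) : ¬ a ≡ a + 1 [ZMOD n] := by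
  intro h
  have := Int.le_of_dvd one_pos (by simpa using h.dvd)
  omega

lemma sub_emod_eq_zero_iff {a b : ℤ} : (a - b) % n = 0 ↔ a ≡ b [ZMOD n] :=
  Int.emod_eq_emod_iff_emod_sub_eq_zero.symm

lemma sub_emod_eq_one_iff (hn : 2 ≤ n) {a b : ℤ} : (a - b) % n = 1 ↔ a ≡ b + 1 [ZMOD n] := by
  rw [show (a - b) % n = 1 ↔ a - b ≡ 1 [ZMOD n] by rw [Int.ModEq, one_emod_eq n hn],
    ← sub_emod_eq_zero_iff, ← sub_emod_eq_zero_iff, sub_sub]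

lemma sFun_of_modEq {i k : ℤ} (h : k ≡ i [ZMOD n]) : sFun n i k = k + 1 := by
  simp [sFun, sub_emod_eq_zero_iff.mpr h]

lemma sFun_of_modEq_add_one (hn : 2 ≤ n) {i k : ℤ} (h : k ≡ i + 1 [ZMOD n]) :
    sFun n i k = k - 1 := by
  simp [sFun, (sub_emod_eq_one_iff hn).mpr h]

lemma sFun_of_not_modEq (hn : 2 ≤ n) {i k : ℤ} (h₀ : ¬ k ≡ i [ZMOD n])
    (h₁ : ¬ k ≡ i + 1 [ZMOD n]) : sFun n i k = k := by
  simp [sFun, sub_emod_eq_zero_iff.not.mpr h₀, (sub_emod_eq_one_iff hn).not.mpr h₁]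

lemma sFun_cases (hn : 2 ≤ n) (i k : ℤ) :
    (k ≡ i [ZMOD n] ∧ sFun n i k = k + 1) ∨ (k ≡ i + 1 [ZMOD n] ∧ sFun n i k = k - 1) ∨
      (¬ k ≡ i [ZMOD n] ∧ ¬ k ≡ i + 1 [ZMOD n] ∧ sFun n i k = k) := by
  by_cases h₀ : k ≡ i [ZMOD n]
  · exact .inl ⟨h₀, sFun_of_modEq h₀⟩
  by_cases h₁ : k ≡ i + 1 [ZMOD n]
  · exact .inr (.inl ⟨h₁, sFun_of_modEq_add_one hn h₁⟩)
  exact .inr (.inr ⟨h₀, h₁, sFun_of_not_modEq hn h₀ h₁⟩)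

lemma sFun_add_n (hn : 2 ≤ n) (i k : ℤ) : sFun n i (k + n) = sFun n i k + n := by
  have hk : k + n ≡ k [ZMOD n] := Int.add_modEq_right
  rcases sFun_cases hn i k with ⟨h, e⟩ | ⟨h, e⟩ | ⟨h₀, h₁, e⟩
  · rw [e, sFun_of_modEq (hk.trans h)]; ring
  · rw [e, sFun_of_modEq_add_one hn (hk.trans h)]; ring
  · rw [e, sFun_of_not_modEq hn (fun h => h₀ (hk.symm.trans h))
      (fun h => h₁ (hk.symm.trans h))]

lemma sFun_lt_sFun (hn : 2 ≤ n) (i : ℤ) {y z : ℤ} (hyz : y < z)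
    (h : ¬ (y ≡ i [ZMOD n] ∧ z = y + 1)) : sFun n i y < sFun n i z := by
  have hn2 : (2 : ℤ) ≤ n := by exact_mod_cast hn
  rcases sFun_cases hn i y with ⟨hy, ey⟩ | ⟨hy, ey⟩ | ⟨hy, -, ey⟩ <;>
    rcases sFun_cases hn i z with ⟨hz, ez⟩ | ⟨hz, ez⟩ | ⟨-, -, ez⟩ <;> rw [ey, ez]
  all_goals first
    | omega
    | (have : z ≠ y + 1 := fun e => h ⟨hy, e⟩
       first
        | omega
        | (have := ((hy.add_right 1).trans hz.symm).add_le_of_lt (by omega); omega))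
    | (have : z ≠ y + 1 := by
          rintro rfl
          exact hy (by simpa using hz.add_right (-1))
       omega)

lemma sFun_le_zero_iff (hn : 2 ≤ n) {i : ℤ} (hi : ¬ i ≡ 0 [ZMOD n]) (k : ℤ) :
    sFun n i k ≤ 0 ↔ k ≤ 0 := by
  rcases sFun_cases hn i k with ⟨h, e⟩ | ⟨h, e⟩ | ⟨-, -, e⟩ <;> rw [e]
  · have : k ≠ 0 := by rintro rfl; exact hi h.symm
    omega
  · have : k ≠ 1 := by rintro rfl; exact hi (by simpa using (h.add_right (-1)).symm)
    omega

lemma sRefl_apply (hn : 2 ≤ n) (i k : ℤ) : sRefl n hn i k = sFun n i k := rfl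

lemma sRefl_mul_self (hn : 2 ≤ n) (i : ℤ) : sRefl n hn i * sRefl n hn i = 1 :=
  Equiv.ext (sFun_involutive n hn i)

lemma sRefl_inv (hn : 2 ≤ n) (i : ℤ) : (sRefl n hn i)⁻¹ = sRefl n hn i :=
  inv_eq_of_mul_eq_one_right (sRefl_mul_self hn i)

end SimpleReflection

section Periodic

def periodicPerms (n : ℕ) : Subgroup (Equiv.Perm ℤ) where
  carrier := {w | ∀ k, w (k + n) = w k + n}
  mul_mem' {u v} hu hv k := by simp only [Equiv.Perm.coe_mul, Function.comp, hv k, hu (v k)]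
  one_mem' _ := rfl
  inv_mem' {w} hw k := w.injective (by rw [hw (w⁻¹ k)]; simp)

variable {n : ℕ} {w : Equiv.Perm ℤ}

lemma periodicPerms_apply_add_mul (hw : w ∈ periodicPerms n) (k t : ℤ) :
    w (k + n * t) = w k + n * t := by
  induction t using Int.induction_on with
  | zero => simp
  | succ t ih => rw [show k + n * (t + 1) = k + n * t + n by ring, hw, ih]; ring
  | pred t ih =>
    have := hw (k + n * (-t - 1))
    rw [show k + n * (-t - 1) + n = k + n * -t by ring, ih] at this
    linarith

lemma periodicPerms_modEq (hw : w ∈ periodicPerms n) {a b : ℤ} (h : a ≡ b [ZMOD n]) :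
    w a ≡ w b [ZMOD n] := by
  obtain ⟨t, ht⟩ := h.dvd
  rw [show b = a + n * t by omega, periodicPerms_apply_add_mul hw]
  exact (Int.modEq_iff_dvd.mpr ⟨t, by ring⟩)

lemma sRefl_mem_periodicPerms (hn : 2 ≤ n) (i : ℤ) : sRefl n hn i ∈ periodicPerms n :=
  sFun_add_n hn i

lemma mem_image_Iic_of_modEq_of_le (hn : 2 ≤ n) (hw : w ∈ periodicPerms n) {y z : ℤ}
    (hz : z ∈ w '' Set.Iic 0) (hyz : y ≡ z [ZMOD n]) (hle : y ≤ z) : y ∈ w '' Set.Iic 0 := by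
  have hn' : (0 : ℤ) < n := by omega
  obtain ⟨a, ha, rfl⟩ := hz
  obtain ⟨t, ht⟩ := hyz.dvd
  have ht0 : 0 ≤ t := by
    by_contra! h
    nlinarith
  refine ⟨a + n * -t, ?_, ?_⟩
  · have := Int.mul_nonneg hn'.le ht0
    simp only [Set.mem_Iic] at ha ⊢
    linarith
  · rw [periodicPerms_apply_add_mul hw]; linarith

end Periodic

section AffineGroup

def affineGroup (n : ℕ) (hn : 2 ≤ n) : Subgroup (Equiv.Perm ℤ) :=
  Subgroup.closure (Set.range (sRefl n hn))

/-- `S_n ⊆ S̃_n`, written exactly as in `IsAffGrassmannian`. -/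
def finiteSymm (n : ℕ) (hn : 2 ≤ n) : Subgroup (Equiv.Perm ℤ) :=
  Subgroup.closure {g | ∃ i : ℤ, ¬ ((i : ℤ) % n = 0) ∧ g = sRefl n hn i}

variable {n : ℕ} {hn : 2 ≤ n} {w : Equiv.Perm ℤ}

lemma wordProd_cons (i : ℤ) (l : List ℤ) :
    wordProd n hn (i :: l) = sRefl n hn i * wordProd n hn l := by
  simp [wordProd]

lemma wordProd_append (l₁ l₂ : List ℤ) :
    wordProd n hn (l₁ ++ l₂) = wordProd n hn l₁ * wordProd n hn l₂ := by
  simp [wordProd]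

lemma sRefl_mem_affineGroup (i : ℤ) : sRefl n hn i ∈ affineGroup n hn :=
  Subgroup.subset_closure ⟨i, rfl⟩

lemma wordProd_mem_affineGroup (l : List ℤ) : wordProd n hn l ∈ affineGroup n hn :=
  Subgroup.list_prod_mem _ (by simpa using fun i _ => sRefl_mem_affineGroup i)

lemma exists_wordProd_eq (hw : w ∈ affineGroup n hn) : ∃ l, w = wordProd n hn l := by
  induction hw using Subgroup.closure_induction_left with
  | one => exact ⟨[], rfl⟩
  | mul_left _ hx _ _ ih =>
    obtain ⟨i, rfl⟩ := hx
    obtain ⟨l, rfl⟩ := ih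
    exact ⟨i :: l, (wordProd_cons i l).symm⟩
  | inv_mul_cancel _ hx _ _ ih =>
    obtain ⟨i, rfl⟩ := hx
    obtain ⟨l, rfl⟩ := ih
    exact ⟨i :: l, by rw [sRefl_inv, wordProd_cons]⟩

lemma affineGroup_le_periodicPerms : affineGroup n hn ≤ periodicPerms n :=
  (Subgroup.closure_le _).mpr (Set.range_subset_iff.mpr (sRefl_mem_periodicPerms hn))

lemma finiteSymm_le_affineGroup : finiteSymm n hn ≤ affineGroup n hn :=
  Subgroup.closure_mono fun _ ⟨i, _, hg⟩ => ⟨i, hg.symm⟩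

lemma alen_le_length {l : List ℤ} (h : w = wordProd n hn l) : alen n hn w ≤ l.length :=
  Nat.sInf_le ⟨l, rfl, h⟩

lemma exists_isReducedWord (hw : w ∈ affineGroup n hn) : ∃ l, IsReducedWord n hn w l := by
  obtain ⟨l, hl⟩ := exists_wordProd_eq hw
  obtain ⟨l', hl', hw'⟩ := Nat.sInf_mem (s := {m | ∃ l, l.length = m ∧ w = wordProd n hn l})
    ⟨_, l, rfl, hl⟩
  exact ⟨l', hw', hl'⟩

lemma alen_mul_le {u v : Equiv.Perm ℤ} (hu : u ∈ affineGroup n hn) (hv : v ∈ affineGroup n hn) :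
    alen n hn (u * v) ≤ alen n hn u + alen n hn v := by
  obtain ⟨l₁, rfl, h₁⟩ := exists_isReducedWord hu
  obtain ⟨l₂, rfl, h₂⟩ := exists_isReducedWord hv
  simpa [← h₁, ← h₂] using alen_le_length (wordProd_append l₁ l₂).symm

lemma alen_sRefl_mul_le (hw : w ∈ affineGroup n hn) (i : ℤ) :
    alen n hn (sRefl n hn i * w) ≤ alen n hn w + 1 := by
  obtain ⟨l, rfl, hl⟩ := exists_isReducedWord hw
  simpa [← hl] using alen_le_length (wordProd_cons (hn := hn) i l).symm

end AffineGroup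

section Window

variable {n : ℕ} {w : Equiv.Perm ℤ}

lemma exists_add_mul_mem_Icc (hn : 2 ≤ n) (k : ℤ) : ∃ t : ℤ, k + n * t ∈ Set.Icc 1 (n : ℤ) := by
  have hn' : (0 : ℤ) < n := by omega
  have h₀ := Int.emod_nonneg (k - 1) hn'.ne'
  have h₁ := Int.emod_lt_of_pos (k - 1) hn'
  have h₂ := Int.emod_def (k - 1) n
  exact ⟨-((k - 1) / n), by constructor <;> linarith⟩

lemma eq_of_modEq_of_mem_Icc {a b : ℤ} (ha : a ∈ Set.Icc 1 (n : ℤ)) (hb : b ∈ Set.Icc 1 (n : ℤ))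
    (h : a ≡ b [ZMOD n]) : a = b := by
  rcases lt_trichotomy a b with hab | rfl | hab
  · linarith [h.add_le_of_lt hab, ha.1, hb.2]
  · rfl
  · linarith [h.symm.add_le_of_lt hab, ha.2, hb.1]

lemma card_filter_modEq (hn : 2 ≤ n) (hw : w ∈ periodicPerms n) (r : ℤ) :
    ((Finset.Icc 1 (n : ℤ)).filter (fun k => w k ≡ r [ZMOD n])).card = 1 := by
  obtain ⟨t, ht⟩ := exists_add_mul_mem_Icc hn (w⁻¹ r)
  have hrep : w⁻¹ r + n * t ≡ w⁻¹ r [ZMOD n] := Int.modEq_iff_dvd.mpr ⟨-t, by ring⟩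
  refine Finset.card_eq_one.mpr ⟨w⁻¹ r + n * t, Finset.ext fun k => ?_⟩
  rw [Finset.mem_filter, Finset.mem_Icc, Finset.mem_singleton]
  constructor
  · rintro ⟨hk, hkr⟩
    refine eq_of_modEq_of_mem_Icc hk ht ((?_ : k ≡ w⁻¹ r [ZMOD n]).trans hrep.symm)
    simpa using periodicPerms_modEq (inv_mem hw) hkr
  · rintro rfl
    exact ⟨ht, by simpa using periodicPerms_modEq hw hrep⟩

lemma sum_Icc_sRefl_mul (hn : 2 ≤ n) (i : ℤ) (hw : w ∈ periodicPerms n) :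
    ∑ k ∈ Finset.Icc 1 (n : ℤ), (sRefl n hn i * w) k = ∑ k ∈ Finset.Icc 1 (n : ℤ), w k := by
  have hs (y : ℤ) : sFun n i y =
      y + (if y ≡ i [ZMOD n] then 1 else 0) - (if y ≡ i + 1 [ZMOD n] then 1 else 0) := by
    rcases sFun_cases hn i y with ⟨h, e⟩ | ⟨h, e⟩ | ⟨h₀, h₁, e⟩
    · rw [e, if_pos h, if_neg fun h' => not_modEq_add_one hn i (h.symm.trans h')]; ring
    · rw [e, if_neg fun h' => not_modEq_add_one hn i (h'.symm.trans h), if_pos h]; ring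
    · rw [e, if_neg h₀, if_neg h₁]; ring
  simp only [Equiv.Perm.mul_apply, sRefl_apply, hs, Finset.sum_sub_distrib,
    Finset.sum_add_distrib, Finset.sum_boole, card_filter_modEq hn hw]
  ring

lemma sum_Icc_of_mem_affineGroup {hn : 2 ≤ n} (hw : w ∈ affineGroup n hn) :
    ∑ k ∈ Finset.Icc 1 (n : ℤ), w k = ∑ k ∈ Finset.Icc 1 (n : ℤ), k := by
  induction hw using Subgroup.closure_induction_left with
  | one => rfl
  | mul_left _ hx _ hy ih =>
    obtain ⟨i, rfl⟩ := hx
    rw [sum_Icc_sRefl_mul hn i (affineGroup_le_periodicPerms hy), ih]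
  | inv_mul_cancel _ hx _ hy ih =>
    obtain ⟨i, rfl⟩ := hx
    rw [sRefl_inv, sum_Icc_sRefl_mul hn i (affineGroup_le_periodicPerms hy), ih]

lemma exists_abs_sub_le (hn : 2 ≤ n) (hw : w ∈ periodicPerms n) : ∃ D, ∀ k, |w k - k| ≤ D := by
  refine ⟨∑ a ∈ Finset.Icc 1 (n : ℤ), |w a - a|, fun k => ?_⟩
  obtain ⟨t, ht⟩ := exists_add_mul_mem_Icc hn k
  rw [show w k - k = w (k + n * t) - (k + n * t) by rw [periodicPerms_apply_add_mul hw]; ring]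
  exact Finset.single_le_sum (f := fun a => |w a - a|) (fun _ _ => abs_nonneg _)
    (Finset.mem_Icc.mpr ht)

end Window

section Inversions

/-- Inversions of `w` up to simultaneous translation by `n`: the first entry is taken in
`[1, n]`. -/
def invSet (n : ℕ) (w : Equiv.Perm ℤ) : Set (ℤ × ℤ) :=
  {p | p.1 ∈ Set.Icc 1 (n : ℤ) ∧ p.1 < p.2 ∧ w p.2 < w p.1}

noncomputable def invCount (n : ℕ) (w : Equiv.Perm ℤ) : ℕ := (invSet n w).ncard

variable {n : ℕ} {w : Equiv.Perm ℤ}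

lemma invSet_finite (hn : 2 ≤ n) (hw : w ∈ periodicPerms n) : (invSet n w).Finite := by
  obtain ⟨D, hD⟩ := exists_abs_sub_le hn hw
  refine ((Set.finite_Icc 1 (n : ℤ)).prod (Set.finite_Icc 1 (n + 2 * D))).subset ?_
  rintro ⟨a, b⟩ ⟨ha, hab, hba⟩
  have := abs_le.mp (hD a)
  have := abs_le.mp (hD b)
  exact ⟨ha, by constructor <;> linarith [ha.1, ha.2]⟩

lemma exists_eq_of_apply_modEq (hw : w ∈ periodicPerms n) {i a b : ℤ}
    (ha : w a ≡ i [ZMOD n]) (hb : w b = w a + 1) :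
    ∃ s, a = w⁻¹ i + n * s ∧ b = w⁻¹ (i + 1) + n * s := by
  obtain ⟨s, hs⟩ := ha.symm.dvd
  have hinv := periodicPerms_apply_add_mul (inv_mem hw)
  exact ⟨s, by rw [← hinv, show i + n * s = w a by omega]; simp,
    by rw [← hinv, show i + 1 + n * s = w b by omega]; simp⟩

lemma invSet_sRefl_mul (hn : 2 ≤ n) (hw : w ∈ periodicPerms n) {i t : ℤ}
    (h : w⁻¹ i < w⁻¹ (i + 1)) (ht : w⁻¹ i + n * t ∈ Set.Icc 1 (n : ℤ)) :
    invSet n (sRefl n hn i * w) =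
      insert (w⁻¹ i + n * t, w⁻¹ (i + 1) + n * t) (invSet n w) := by
  have hw_inv := periodicPerms_apply_add_mul hw
  have hq₁ : w (w⁻¹ i + n * t) = i + n * t := by rw [hw_inv]; simp
  have hq₂ : w (w⁻¹ (i + 1) + n * t) = i + n * t + 1 := by rw [hw_inv]; simp; ring
  have hrep : i + n * t ≡ i [ZMOD n] := Int.modEq_iff_dvd.mpr ⟨-t, by ring⟩
  ext ⟨a, b⟩
  simp only [invSet, Set.mem_ofPred_eq, Set.mem_insert_iff, Prod.mk.injEq, Equiv.Perm.mul_apply,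
    sRefl_apply]
  by_cases hq : a = w⁻¹ i + n * t ∧ b = w⁻¹ (i + 1) + n * t
  · obtain ⟨rfl, rfl⟩ := hq
    rw [hq₁, hq₂, sFun_of_modEq hrep, sFun_of_modEq_add_one hn (hrep.add_right 1)]
    exact iff_of_true ⟨ht, by linarith, by linarith⟩ (.inl ⟨rfl, rfl⟩)
  rw [or_iff_right hq]
  refine and_congr_right fun ha => and_congr_right fun hab => ⟨fun hlt => ?_, fun hlt => ?_⟩
  · by_contra hle
    have hlt' : w a < w b := lt_of_le_of_ne (not_lt.mp hle) (w.injective.ne hab.ne)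
    refine (sFun_lt_sFun hn i hlt' fun ⟨ha', hb⟩ => hq ?_).asymm hlt
    obtain ⟨s, rfl, rfl⟩ := exists_eq_of_apply_modEq hw ha' hb
    have hst := eq_of_modEq_of_mem_Icc ha ht (Int.modEq_iff_dvd.mpr ⟨t - s, by ring⟩)
    constructor <;> linarith
  · refine sFun_lt_sFun hn i hlt fun ⟨hb, hab'⟩ => ?_
    obtain ⟨s, rfl, rfl⟩ := exists_eq_of_apply_modEq hw hb hab'
    linarith

lemma invCount_sRefl_mul_of_lt (hn : 2 ≤ n) (hw : w ∈ periodicPerms n) {i : ℤ}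
    (h : w⁻¹ i < w⁻¹ (i + 1)) : invCount n (sRefl n hn i * w) = invCount n w + 1 := by
  obtain ⟨t, ht⟩ := exists_add_mul_mem_Icc hn (w⁻¹ i)
  rw [invCount, invSet_sRefl_mul hn hw h ht, Set.ncard_insert_of_notMem _ (invSet_finite hn hw),
    invCount]
  rintro ⟨-, -, hlt⟩
  rw [periodicPerms_apply_add_mul hw, periodicPerms_apply_add_mul hw] at hlt
  simp at hlt

lemma invCount_sRefl_mul_of_gt (hn : 2 ≤ n) (hw : w ∈ periodicPerms n) {i : ℤ}
    (h : w⁻¹ (i + 1) < w⁻¹ i) : invCount n (sRefl n hn i * w) + 1 = invCount n w := by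
  have hw' := mul_mem (sRefl_mem_periodicPerms hn i) hw
  have h' : (sRefl n hn i * w)⁻¹ i < (sRefl n hn i * w)⁻¹ (i + 1) := by
    simpa [sRefl_inv, sRefl_apply, sFun_of_modEq (Int.ModEq.refl i),
      sFun_of_modEq_add_one hn (Int.ModEq.refl (i + 1))] using h
  rw [← invCount_sRefl_mul_of_lt hn hw' h', ← mul_assoc, sRefl_mul_self, one_mul]

end Inversions

lemma Equiv.Perm.apply_add_one_of_strictMono {f : Equiv.Perm ℤ} (hf : StrictMono f) (k : ℤ) :
    f (k + 1) = f k + 1 := by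
  obtain ⟨m, hm⟩ := f.surjective (f k + 1)
  have h₁ : k < m := hf.lt_iff_lt.mp (by omega)
  have h₂ := hf (lt_add_one k)
  by_contra hne
  have h₃ : m < k + 1 := hf.lt_iff_lt.mp (by omega)
  omega

lemma Equiv.Perm.eq_add_of_strictMono {f : Equiv.Perm ℤ} (hf : StrictMono f) (k : ℤ) :
    f k = k + f 0 := by
  induction k using Int.induction_on with
  | zero => simp
  | succ k ih => rw [f.apply_add_one_of_strictMono hf, ih]; ring
  | pred k ih =>
    have := f.apply_add_one_of_strictMono hf (-k - 1)
    rw [sub_add_cancel] at this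
    omega

section Length

variable {n : ℕ} {hn : 2 ≤ n} {w : Equiv.Perm ℤ}

lemma invCount_sRefl_mul_le (hw : w ∈ periodicPerms n) (i : ℤ) :
    invCount n (sRefl n hn i * w) ≤ invCount n w + 1 := by
  rcases lt_trichotomy (w⁻¹ i) (w⁻¹ (i + 1)) with h | h | h
  · exact (invCount_sRefl_mul_of_lt hn hw h).le
  · simp at h
  · have := invCount_sRefl_mul_of_gt hn hw h
    omega

lemma invCount_wordProd_le (l : List ℤ) : invCount n (wordProd n hn l) ≤ l.length := by
  induction l with
  | nil =>
    have : invSet n 1 = ∅ := Set.eq_empty_of_forall_notMem fun _ hp => hp.2.1.not_gt hp.2.2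
    simp [wordProd, invCount, this]
  | cons i l ih =>
    have := invCount_sRefl_mul_le (hn := hn)
      (affineGroup_le_periodicPerms (wordProd_mem_affineGroup (hn := hn) l)) i
    rw [wordProd_cons, List.length_cons]
    omega

lemma invCount_le_alen (hw : w ∈ affineGroup n hn) : invCount n w ≤ alen n hn w := by
  obtain ⟨l, rfl, hl⟩ := exists_isReducedWord hw
  exact hl ▸ invCount_wordProd_le l

/-- Without a descent `w` would be a translation, which the window sum rules out. -/
lemma exists_descent (hw : w ∈ affineGroup n hn) (hne : w ≠ 1) :
    ∃ i, w⁻¹ (i + 1) < w⁻¹ i := by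
  by_contra! h
  have hmono : StrictMono ⇑w⁻¹ :=
    strictMono_int_of_lt_succ fun i => (h i).lt_of_ne (w⁻¹.injective.ne (by omega))
  have hw' (k : ℤ) : w k = k - w⁻¹ 0 := by
    have := w⁻¹.eq_add_of_strictMono hmono (w k)
    rw [(Equiv.Perm.inv_eq_iff_eq.mpr rfl : w⁻¹ (w k) = k)] at this
    omega
  have hsum := sum_Icc_of_mem_affineGroup hw
  simp only [hw', Finset.sum_sub_distrib, Finset.sum_const, Int.card_Icc, sub_eq_self,
    add_sub_cancel_right, Int.toNat_natCast, smul_eq_zero] at hsum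
  refine hne (Equiv.ext fun k => ?_)
  rw [hw', hsum.resolve_left (by omega), sub_zero, Equiv.Perm.one_apply]

lemma alen_le_invCount (hw : w ∈ affineGroup n hn) : alen n hn w ≤ invCount n w := by
  induction hm : invCount n w using Nat.strong_induction_on generalizing w with
  | _ m ih =>
  by_cases hone : w = 1
  · subst hone
    exact (alen_le_length (l := []) rfl).trans (Nat.zero_le _)
  obtain ⟨i, hi⟩ := exists_descent hw hone
  have hw' := mul_mem (sRefl_mem_affineGroup i) hw
  have hcount := invCount_sRefl_mul_of_gt hn (affineGroup_le_periodicPerms hw) hi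
  have hih := ih _ (by omega) hw' rfl
  have hback := alen_sRefl_mul_le hw' i
  rw [← mul_assoc, sRefl_mul_self, one_mul] at hback
  omega

lemma alen_eq_invCount (hw : w ∈ affineGroup n hn) : alen n hn w = invCount n w :=
  (alen_le_invCount hw).antisymm (invCount_le_alen hw)

lemma alen_sRefl_mul_lt (hw : w ∈ affineGroup n hn) {i : ℤ} (h : w⁻¹ (i + 1) < w⁻¹ i) :
    alen n hn (sRefl n hn i * w) < alen n hn w := by
  rw [alen_eq_invCount hw, alen_eq_invCount (mul_mem (sRefl_mem_affineGroup i) hw),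
    ← invCount_sRefl_mul_of_gt hn (affineGroup_le_periodicPerms hw) h]
  exact lt_add_one _

lemma mem_finiteSymm_of_forall_le_zero_iff (hw : w ∈ affineGroup n hn)
    (h : ∀ k, w k ≤ 0 ↔ k ≤ 0) : w ∈ finiteSymm n hn := by
  induction hm : invCount n w using Nat.strong_induction_on generalizing w with
  | _ m ih =>
  by_cases hone : w = 1
  · exact hone ▸ one_mem _
  obtain ⟨i, hi⟩ := exists_descent hw hone
  -- `w` preserves every block `(tn - n, tn]`, so `w⁻¹ (tn) ≤ tn < w⁻¹ (tn + 1)`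
  have hi0 : ¬ i ≡ 0 [ZMOD n] := by
    intro hi0
    obtain ⟨t, ht⟩ := hi0.symm.dvd
    have hp := periodicPerms_apply_add_mul (inv_mem (affineGroup_le_periodicPerms hw))
    have h₀ := (h (w⁻¹ 0)).mp (by simp)
    have h₁ := (h (w⁻¹ 1)).not.mp (by simp)
    rw [show i = 0 + n * t by omega, show 0 + n * t + 1 = 1 + n * t by ring, hp, hp] at hi
    omega
  have hs : sRefl n hn i ∈ finiteSymm n hn :=
    Subgroup.subset_closure ⟨i, fun h' => hi0 (by rw [Int.ModEq, h', Int.zero_emod]), rfl⟩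
  have hw' := mul_mem (sRefl_mem_affineGroup i) hw
  have hcount := invCount_sRefl_mul_of_gt hn (affineGroup_le_periodicPerms hw) hi
  have hmem := ih _ (by omega) hw' (fun k => (sFun_le_zero_iff hn hi0 (w k)).trans (h k)) rfl
  simpa [← mul_assoc, sRefl_mul_self] using mul_mem hs hmem

end Length

section BetaSet

/-- The beta-set `{λ_r - r}`: the beads of `p` on the abacus. -/
def betaSet (p : YPartition) : Set ℤ := Set.range (cornerContent p)

variable {n : ℕ} {p q : YPartition}

lemma cornerContent_strictAnti (p : YPartition) : StrictAnti (cornerContent p) :=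
  strictAnti_nat_of_succ_lt fun r => by
    have := p.antitone' (Nat.le_add_right r 1)
    simp only [cornerContent]
    omega

lemma addableCorner_iff {r : ℕ} : AddableCorner p r ↔ cornerContent p r + 1 ∉ betaSet p := by
  have hanti := cornerContent_strictAnti p
  rcases r with _ | r
  · refine iff_of_true (.inl rfl) fun ⟨s, hs⟩ => ?_
    have := hanti.antitone (Nat.zero_le s)
    omega
  · have hle := p.antitone' (Nat.le_add_right r 1)
    simp only [AddableCorner, Nat.add_one_ne_zero, false_or, Nat.add_sub_cancel]
    constructor
    · rintro h ⟨s, hs⟩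
      have hsr : s < r + 1 := hanti.lt_iff_gt.mp (by omega)
      have := hanti.antitone (Nat.lt_succ_iff.mp hsr)
      simp only [cornerContent] at *
      omega
    · intro h
      by_contra h'
      exact h ⟨r, by simp only [cornerContent]; omega⟩

lemma betaSet_emptyPartition : betaSet emptyPartition = Set.Iic 0 := by
  ext z
  simp only [betaSet, cornerContent, emptyPartition, Set.mem_range, Set.mem_Iic]
  exact ⟨fun ⟨r, hr⟩ => by omega, fun hz => ⟨(-z).toNat, by omega⟩⟩

/-- Moving every bead `z ≡ i` with a gap at `z + 1` one step up is the action of `s_i`, provided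
no bead `z ≡ i + 1` has a gap at `z - 1`. -/
lemma image_eq_image_sFun (hn : 2 ≤ n) {i : ℤ} {B : Set ℤ}
    (hB : ∀ z ∈ B, z ≡ i + 1 [ZMOD n] → z - 1 ∈ B) :
    (fun z => if z + 1 ∉ B ∧ z ≡ i [ZMOD n] then z + 1 else z) '' B = sFun n i '' B := by
  have hne (z : ℤ) (h : z ≡ i + 1 [ZMOD n]) : ¬ z ≡ i [ZMOD n] := fun h' =>
    not_modEq_add_one hn i (h'.symm.trans h)
  refine Set.Subset.antisymm ?_ ?_
  · rintro _ ⟨y, hy, rfl⟩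
    dsimp only
    split_ifs with h
    · exact ⟨y, hy, sFun_of_modEq h.2⟩
    rcases sFun_cases hn i y with ⟨hi, -⟩ | ⟨hi, -⟩ | ⟨-, -, e⟩
    · refine ⟨y + 1, not_not.mp fun h' => h ⟨h', hi⟩, ?_⟩
      rw [sFun_of_modEq_add_one hn (hi.add_right 1), add_sub_cancel_right]
    · refine ⟨y - 1, hB y hy hi, ?_⟩
      rw [sFun_of_modEq (by simpa using hi.sub_right 1), sub_add_cancel]
    · exact ⟨y, hy, e⟩
  · rintro _ ⟨y, hy, rfl⟩
    rcases sFun_cases hn i y with ⟨hi, e⟩ | ⟨hi, e⟩ | ⟨hi, -, e⟩ <;> rw [e]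
    · by_cases hy' : y + 1 ∈ B
      · exact ⟨y + 1, hy', if_neg fun h => hne _ (hi.add_right 1) h.2⟩
      · exact ⟨y, hy, if_pos ⟨hy', hi⟩⟩
    · refine ⟨y - 1, hB y hy hi, if_neg fun h => h.1 (by rwa [sub_add_cancel])⟩
    · exact ⟨y, hy, if_neg fun h => hi h.2⟩

lemma betaSet_of_actStep (hn : 2 ≤ n) {w : Equiv.Perm ℤ} (hw : w ∈ periodicPerms n)
    (hp : betaSet p = w '' Set.Iic 0) {i : ℤ} (h : ActStep n i p q) :
    betaSet q = sFun n i '' betaSet p := by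
  have hq : cornerContent q = (fun z => if z + 1 ∉ betaSet p ∧ z ≡ i [ZMOD n] then z + 1 else z) ∘
      cornerContent p := by
    funext r
    have hr := h.2 r
    simp only [addableCorner_iff, sub_emod_eq_zero_iff] at hr
    simp only [Function.comp]
    split_ifs at hr ⊢
    · simp only [cornerContent, hr]
      push_cast
      ring
    · simp only [cornerContent, hr]
  rw [betaSet, hq, Set.range_comp, ← betaSet]
  refine image_eq_image_sFun hn fun z hz hzi => ?_
  obtain ⟨r, hr, hri⟩ := h.1
  rw [addableCorner_iff, hp] at hr
  rw [sub_emod_eq_zero_iff] at hri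
  rw [hp] at hz ⊢
  have hy : cornerContent p r ∈ w '' Set.Iic 0 := hp ▸ ⟨r, rfl⟩
  have hzy : z ≡ cornerContent p r + 1 [ZMOD n] := hzi.trans (hri.add_right 1).symm
  rcases le_or_gt (z - 1) (cornerContent p r) with hle | hlt
  · exact mem_image_Iic_of_modEq_of_le hn hw hy (by simpa using hzy.sub_right 1) hle
  · exact absurd (mem_image_Iic_of_modEq_of_le hn hw hz hzy.symm (by omega)) hr

lemma betaSet_of_actList (hn : 2 ≤ n) {l : List ℤ} (h : ActList n l emptyPartition q) :
    betaSet q = wordProd n hn l '' Set.Iic 0 := by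
  induction l generalizing q with
  | nil =>
    rw [show q = emptyPartition from h, betaSet_emptyPartition]
    exact (Set.image_id _).symm
  | cons i l ih =>
    obtain ⟨p, hp, hstep⟩ := h
    rw [betaSet_of_actStep hn (affineGroup_le_periodicPerms (wordProd_mem_affineGroup l)) (ih hp)
      hstep, ih hp, wordProd_cons, Equiv.Perm.coe_mul, Set.image_comp]
    rfl

end BetaSet

section RunnerTop

/-- On the abacus: no bead of `B` lies above `c`, and the runner of `c` is full up to `c`. -/
def IsRunnerTop (n : ℕ) (c : ℤ) (B : Set ℤ) : Prop :=
  (∀ z ∈ B, z ≤ c) ∧ ∀ z, z ≡ c [ZMOD n] → z ≤ c → z ∈ B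

variable {n : ℕ} {hn : 2 ≤ n} {c : ℤ} {B : Set ℤ}

lemma isRunnerTop_betaSet (hn : 2 ≤ n) {p : YPartition} {w : Equiv.Perm ℤ} (hw : w ∈ periodicPerms n)
    (hp : betaSet p = w '' Set.Iic 0) : IsRunnerTop n (p.part 0) (betaSet p) := by
  refine ⟨?_, fun z hz hle => ?_⟩
  · rintro _ ⟨r, rfl⟩
    simpa [cornerContent] using (cornerContent_strictAnti p).antitone (Nat.zero_le r)
  · rw [hp]
    exact mem_image_Iic_of_modEq_of_le hn hw (hp ▸ ⟨0, by simp [cornerContent]⟩) hz hle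

lemma IsRunnerTop.image_sFun (hn : 2 ≤ n) (hB : IsRunnerTop n c B) {i : ℤ} (hi : ¬ i ≡ c [ZMOD n])
    (hi' : ¬ i + 1 ≡ c [ZMOD n]) : IsRunnerTop n c (sFun n i '' B) := by
  refine ⟨?_, fun z hz hzc => ⟨z, hB.2 z hz hzc, sFun_of_not_modEq hn
    (fun h => hi (h.symm.trans hz)) (fun h => hi' (h.symm.trans hz))⟩⟩
  rintro _ ⟨y, hy, rfl⟩
  have := hB.1 y hy
  rcases sFun_cases hn i y with ⟨h, e⟩ | ⟨-, e⟩ | ⟨-, -, e⟩ <;> rw [e]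
  · have : y ≠ c := by rintro rfl; exact hi h.symm
    omega
  · omega
  · exact this

lemma IsRunnerTop.image_wordProd (hB : IsRunnerTop n c B) {l : List ℤ}
    (hl : ∀ i ∈ l, ¬ i ≡ c [ZMOD n] ∧ ¬ i + 1 ≡ c [ZMOD n]) :
    IsRunnerTop n c (wordProd n hn l '' B) := by
  induction l with
  | nil => simpa [wordProd] using hB
  | cons i l ih =>
    rw [wordProd_cons, Equiv.Perm.coe_mul, Set.image_comp]
    have hi := hl i List.mem_cons_self
    exact (ih fun b hb => hl b (List.mem_cons_of_mem i hb)).image_sFun hn hi.1 hi.2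

/-- Unless `s_j` is a left descent of `v`, the runner-top shape forces `s_j` to fix the beads
`v(ℤ_{≤ 0})`. -/
lemma inv_mul_sRefl_mul_mem_finiteSymm {v : Equiv.Perm ℤ} (hv : v ∈ affineGroup n hn)
    (hB : IsRunnerTop n c (v '' Set.Iic 0)) {j : ℤ} (hj : j + 1 ≡ c [ZMOD n])
    (hlen : alen n hn v < alen n hn (sRefl n hn j * v)) :
    v⁻¹ * (sRefl n hn j * v) ∈ finiteSymm n hn := by
  have hmem (z : ℤ) : z ∈ v '' Set.Iic 0 ↔ v⁻¹ z ≤ 0 := Set.mem_image_equiv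
  have hstep (z : ℤ) (hz : z ≡ j [ZMOD n]) : z ∈ v '' Set.Iic 0 ↔ z + 1 ∈ v '' Set.Iic 0 := by
    refine ⟨fun hzB => hB.2 _ ((hz.add_right 1).trans hj) ?_, fun hz₁ => ?_⟩
    · have : z ≠ c := by
        rintro rfl
        exact not_modEq_add_one hn z ((hz.add_right 1).trans hj).symm
      have := hB.1 z hzB
      omega
    · by_contra hz₀
      obtain ⟨t, ht⟩ := hz.symm.dvd
      have hp := periodicPerms_apply_add_mul (inv_mem (affineGroup_le_periodicPerms hv))
      rw [hmem, show z = j + n * t by omega, hp] at hz₀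
      rw [hmem, show z + 1 = j + 1 + n * t by omega, hp] at hz₁
      exact (alen_sRefl_mul_lt hv (by omega)).not_gt hlen
  have hstable (y : ℤ) : sFun n j y ∈ v '' Set.Iic 0 ↔ y ∈ v '' Set.Iic 0 := by
    rcases sFun_cases hn j y with ⟨h, e⟩ | ⟨h, e⟩ | ⟨-, -, e⟩ <;> rw [e]
    · exact (hstep y h).symm
    · simpa using hstep (y - 1) (by simpa using h.sub_right 1)
  refine mem_finiteSymm_of_forall_le_zero_iff
    (mul_mem (inv_mem hv) (mul_mem (sRefl_mem_affineGroup j) hv)) fun k => ?_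
  rw [Equiv.Perm.mul_apply, Equiv.Perm.mul_apply, ← hmem, sRefl_apply, hstable, hmem,
    Equiv.Perm.inv_eq_iff_eq.mpr rfl]

end RunnerTop

section ReducedWords

variable {n : ℕ} {hn : 2 ≤ n}

lemma alen_wordProd_of_append {l₁ l₂ : List ℤ}
    (h : alen n hn (wordProd n hn (l₁ ++ l₂)) = (l₁ ++ l₂).length) :
    alen n hn (wordProd n hn l₂) = l₂.length := by
  have h₁ := alen_le_length (hn := hn) (rfl : wordProd n hn l₁ = _)
  have h₂ := alen_le_length (hn := hn) (rfl : wordProd n hn l₂ = _)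
  have := alen_mul_le (wordProd_mem_affineGroup (hn := hn) l₁) (wordProd_mem_affineGroup l₂)
  rw [← wordProd_append, h, List.length_append] at this
  omega

/-- A right factor of a reduced word of a minimal coset representative of `S̃_n / S_n` is again
one. -/
lemma alen_le_alen_mul_of_append {u : Equiv.Perm ℤ}
    (hu : ∀ g ∈ finiteSymm n hn, alen n hn u ≤ alen n hn (u * g)) {l₁ l₂ : List ℤ}
    (hul : u = wordProd n hn (l₁ ++ l₂)) (hlen : alen n hn u = (l₁ ++ l₂).length)
    {g : Equiv.Perm ℤ} (hg : g ∈ finiteSymm n hn) :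
    alen n hn (wordProd n hn l₂) ≤ alen n hn (wordProd n hn l₂ * g) := by
  have h₂ := alen_wordProd_of_append (hul ▸ hlen)
  have h₁ := alen_le_length (hn := hn) (rfl : wordProd n hn l₁ = _)
  have := alen_mul_le (wordProd_mem_affineGroup (hn := hn) l₁)
    (mul_mem (wordProd_mem_affineGroup l₂) (finiteSymm_le_affineGroup hg))
  rw [← mul_assoc, ← wordProd_append, ← hul] at this
  have := hu g hg
  rw [List.length_append] at hlen
  omega

/-- A letter `j ≡ λ₁ - 1` of `l` would give a right factor `s_j v` of `u` with `s_j v ∈ v S_n`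
and `ℓ(s_j v) > ℓ(v)`. -/
lemma not_add_one_modEq_of_mem {u : Equiv.Perm ℤ}
    (hu : ∀ g ∈ finiteSymm n hn, alen n hn u ≤ alen n hn (u * g)) {l l₀ : List ℤ}
    (hul : u = wordProd n hn (l ++ l₀)) (hlen : alen n hn u = (l ++ l₀).length)
    (hcd : IsCDWord n l) {lam : YPartition} (hact : ActList n l₀ emptyPartition lam) {j : ℤ}
    (hj : j ∈ l) : ¬ j + 1 ≡ lam.part 0 [ZMOD n] := by
  intro hjc
  obtain ⟨l₁, l₂, rfl⟩ := List.append_of_mem hj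
  have hsplit : l₁ ++ j :: l₂ ++ l₀ = l₁ ++ j :: (l₂ ++ l₀) := by simp
  have hsplit' : l₁ ++ j :: l₂ ++ l₀ = (l₁ ++ [j]) ++ (l₂ ++ l₀) := by simp
  have hv := alen_wordProd_of_append (hn := hn) (hsplit' ▸ hul ▸ hlen)
  have hjv := alen_wordProd_of_append (hn := hn) (hsplit ▸ hul ▸ hlen)
  rw [wordProd_cons, List.length_cons] at hjv
  have hl₂ (b : ℤ) (hb : b ∈ l₂) : ¬ b ≡ lam.part 0 [ZMOD n] ∧ ¬ b + 1 ≡ lam.part 0 [ZMOD n] := by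
    have := List.rel_of_pairwise_cons (List.pairwise_append.mp hcd).2.1 hb
    rw [sub_emod_eq_zero_iff, sub_emod_eq_zero_iff] at this
    exact ⟨fun h => this.2 (h.trans hjc.symm),
      fun h => this.1 ((hjc.trans h.symm).add_right_cancel' 1)⟩
  have hB : IsRunnerTop n (lam.part 0) (wordProd n hn (l₂ ++ l₀) '' Set.Iic 0) := by
    rw [wordProd_append, Equiv.Perm.coe_mul, Set.image_comp, ← betaSet_of_actList hn hact]
    exact (isRunnerTop_betaSet hn (affineGroup_le_periodicPerms (wordProd_mem_affineGroup l₀))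
      (betaSet_of_actList hn hact)).image_wordProd hl₂
  have hσ := inv_mul_sRefl_mul_mem_finiteSymm (wordProd_mem_affineGroup _) hB hjc (by omega)
  have := alen_le_alen_mul_of_append hu (hul.trans (congrArg _ hsplit)) (hsplit ▸ hlen)
    (inv_mem hσ)
  rw [wordProd_cons, mul_inv_rev, inv_inv, mul_inv_cancel_left] at this
  omega

end ReducedWords

theorem cyclically_decreasing_mem_parabolic_general
    (n : ℕ) (hn : 2 ≤ n) (lam : YPartition)
    (wl u : Equiv.Perm ℤ)
    (hal : ACoreOf n hn wl lam)
    (hu : IsAffGrassmannian n hn u)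
    (hcd : IsCyclicallyDecreasing n hn (u * wl⁻¹))
    (hlen : alen n hn (u * wl⁻¹) + alen n hn wl = alen n hn u) :
    u * wl⁻¹ ∈ Subgroup.closure
      {g : Equiv.Perm ℤ | ∃ i : ℤ,
        ¬ ((i - ((lam.part 0 : ℤ) - 1)) % (n : ℤ) = 0) ∧ g = sRefl n hn i} := by
  obtain ⟨l, ⟨hl, hl_len⟩, hl_cd⟩ := hcd
  obtain ⟨l₀, ⟨hl₀, hl₀_len⟩, hact⟩ := hal
  have hul : u = wordProd n hn (l ++ l₀) := by
    rw [wordProd_append, ← hl, ← hl₀, inv_mul_cancel_right]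
  have hu_len : alen n hn u = (l ++ l₀).length := by
    rw [List.length_append]
    omega
  rw [hl]
  refine Subgroup.list_prod_mem _ fun g hg => ?_
  obtain ⟨j, hj, rfl⟩ := List.mem_map.mp hg
  refine Subgroup.subset_closure ⟨j, fun h => ?_, rfl⟩
  refine not_add_one_modEq_of_mem hu.2 hul hu_len hl_cd hact hj ?_
  simpa using (sub_emod_eq_zero_iff.mp h).add_right 1

/-- If `u w_λ⁻¹` is cyclically decreasing with `ℓ(u w_λ⁻¹) = ℓ(u) - ℓ(w_λ)`,
then `u w_λ⁻¹` lies in the subgroup generated by the simple reflections other than `s_x`,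
where `x = λ₁ - 1 (mod n)`. -/
theorem cyclically_decreasing_mem_parabolic
    (n : ℕ) (hn : 2 ≤ n) (lam : YPartition) (hcore : IsCore n lam)
    (wl u : Equiv.Perm ℤ)
    (hwl : IsAffGrassmannian n hn wl) (hal : ACoreOf n hn wl lam)
    (hu : IsAffGrassmannian n hn u)
    (hcd : IsCyclicallyDecreasing n hn (u * wl⁻¹))
    (hlen : alen n hn (u * wl⁻¹) + alen n hn wl = alen n hn u) :
    u * wl⁻¹ ∈ Subgroup.closure
      {g : Equiv.Perm ℤ | ∃ i : ℤ,
        ¬ ((i - ((lam.part 0 : ℤ) - 1)) % (n : ℤ) = 0) ∧ g = sRefl n hn i} :=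
  cyclically_decreasing_mem_parabolic_general n hn lam wl u hal hu hcd hlen
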